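/- Let P(x,w) ∈ ℚ[[x,w]] be any formal power series and let a, d ≥ 0 be integers. Define P̂(y,u) ∈ ℚ[[y,u]] by substituting x = y·R(u)^{−1} and w = −u·(1+4u)^{−1} into P (this substitution is well defined since the series substituted for w has zero constant term). Then the coefficient of x^a·w^d in P equals (−1)^d times the coefficient of y^a·u^d in R(u)^{a+2d−2}·P̂(y,u). -/

import Mathlib

/-!
Since `R² = 1 + 4u =: S`, the right-hand side is `(-1)^d [u^d] S^{d-1} P_a(w)`
with `P_a = [x^a] P` and `w = -u/S`.  Expanding `P_a(w) = ∑ₖ [w^k] P_a · w^k`, the term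
`S^{d-1} w^k = (-u)^k S^{d-1-k}` for `k < d` is a polynomial of degree `d - 1`, so it has no
`u^d` coefficient, while for `k = d` the term `(-u)^d S⁻¹` contributes `(-1)^d`.
-/

open PowerSeries Finset

noncomputable def comp (g h : PowerSeries ℚ) : PowerSeries ℚ :=
  PowerSeries.mk fun n =>
    ∑ k ∈ Finset.range (n + 1), PowerSeries.coeff (R := ℚ) k g * PowerSeries.coeff (R := ℚ) n (h ^ k)

noncomputable def wSubst : PowerSeries ℚ :=
  -(PowerSeries.X * (1 + 4 * PowerSeries.X)⁻¹)

noncomputable def hatSubst (R : PowerSeries ℚ) (P : PowerSeries (PowerSeries ℚ)) :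
    PowerSeries (PowerSeries ℚ) :=
  PowerSeries.mk fun a =>
    (R⁻¹) ^ a * comp (PowerSeries.coeff (R := PowerSeries ℚ) a P) wSubst

theorem coeff_pow_eq_zero_of_lt {A : Type*} [CommSemiring A] {h : A⟦X⟧}
    (hh : constantCoeff h = 0) {j k : ℕ} (hjk : j < k) : coeff j (h ^ k) = 0 :=
  coeff_of_lt_order j ((Nat.cast_lt.2 hjk).trans_le (le_order_pow_of_constantCoeff_eq_zero k hh))

theorem coeff_mul_comp (A g h : ℚ⟦X⟧) (hh : constantCoeff h = 0) (n : ℕ) :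
    coeff n (A * comp g h) = ∑ k ∈ range (n + 1), coeff k g * coeff n (A * h ^ k) := by
  have hterm : ∀ p ∈ antidiagonal n, coeff p.1 A * coeff p.2 (comp g h) =
      ∑ k ∈ range (n + 1), coeff k g * (coeff p.1 A * coeff p.2 (h ^ k)) := by
    intro p hp
    rw [HasAntidiagonal.mem_antidiagonal] at hp
    rw [comp, coeff_mk, mul_sum]
    -- the terms with `p.2 < k ≤ n` vanish because `h ^ k` starts in degree `k`
    refine sum_subset (range_subset_range.mpr (by omega)) (fun k _ hk' => ?_) |>.trans
      (sum_congr rfl fun k _ => by ring)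
    rw [mem_range, not_lt] at hk'
    rw [coeff_pow_eq_zero_of_lt hh (by omega), mul_zero, mul_zero]
  rw [coeff_mul, sum_congr rfl hterm, sum_comm]
  simp only [← mul_sum, ← coeff_mul]

theorem constantCoeff_wSubst : constantCoeff wSubst = 0 := by
  simp [wSubst]

theorem constantCoeff_one_add_four_mul_X : constantCoeff (1 + 4 * X : ℚ⟦X⟧) = 1 := by
  simp

theorem one_add_four_mul_X_mul_inv : (1 + 4 * X : ℚ⟦X⟧) * (1 + 4 * X)⁻¹ = 1 :=
  PowerSeries.mul_inv_cancel _ (by rw [constantCoeff_one_add_four_mul_X]; exact one_ne_zero)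

theorem coeff_one_add_four_mul_X_pow_eq_zero {m n : ℕ} (h : m < n) :
    coeff n ((1 + 4 * X : ℚ⟦X⟧) ^ m) = 0 := by
  have hcoe : (1 + 4 * X : ℚ⟦X⟧) = ((1 + 4 * Polynomial.X : Polynomial ℚ) : ℚ⟦X⟧) := by
    simp [← map_ofNat Polynomial.coeToPowerSeries.ringHom 4]
  have hdeg : (1 + 4 * Polynomial.X : Polynomial ℚ).natDegree ≤ 1 := by compute_degree
  rw [hcoe, ← Polynomial.coe_pow, Polynomial.coeff_coe]
  refine Polynomial.coeff_eq_zero_of_natDegree_lt ?_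
  calc _ ≤ m * 1 := Polynomial.natDegree_pow_le_of_le m hdeg
    _ < n := by omega

theorem coeff_mul_wSubst_pow {k d : ℕ} (hk : k ≤ d) :
    coeff d ((1 + 4 * X : ℚ⟦X⟧) ^ d * (1 + 4 * X)⁻¹ * wSubst ^ k) =
      if k = d then (-1) ^ d else 0 := by
  set S : ℚ⟦X⟧ := 1 + 4 * X with hS
  have hSk (m : ℕ) : S ^ m * S⁻¹ ^ m = 1 := by rw [← mul_pow, one_add_four_mul_X_mul_inv, one_pow]
  have hw : wSubst ^ k = C ((-1) ^ k) * X ^ k * S⁻¹ ^ k := by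
    rw [wSubst, ← hS, map_pow, map_neg, map_one]
    ring
  clear_value S
  rcases hk.eq_or_lt with rfl | hlt
  · have : S ^ k * S⁻¹ * wSubst ^ k = C ((-1) ^ k) * (X ^ k * S⁻¹) := by
      linear_combination (C ((-1) ^ k) * X ^ k * S⁻¹) * hSk k + S ^ k * S⁻¹ * hw
    rw [this, coeff_C_mul, coeff_X_pow_mul', if_pos le_rfl, Nat.sub_self,
      coeff_zero_eq_constantCoeff_apply, constantCoeff_inv, hS, constantCoeff_one_add_four_mul_X]
    simp
  · obtain ⟨e, rfl⟩ := Nat.exists_eq_add_of_lt hlt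
    have : S ^ (k + e + 1) * S⁻¹ * wSubst ^ k = C ((-1) ^ k) * (X ^ k * S ^ e) := by
      linear_combination (C ((-1) ^ k) * X ^ k * S ^ e) * hSk (k + 1) +
        S ^ (k + e + 1) * S⁻¹ * hw
    rw [this, coeff_C_mul, coeff_X_pow_mul', if_pos hlt.le, hS,
      coeff_one_add_four_mul_X_pow_eq_zero (by omega), mul_zero, if_neg hlt.ne]

theorem coeff_mul_comp_wSubst (Q : ℚ⟦X⟧) (d : ℕ) :
    coeff d ((1 + 4 * X : ℚ⟦X⟧) ^ d * (1 + 4 * X)⁻¹ * comp Q wSubst) = (-1) ^ d * coeff d Q := by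
  rw [coeff_mul_comp _ _ _ constantCoeff_wSubst,
    sum_congr rfl fun k hk => by rw [coeff_mul_wSubst_pow (Nat.lt_succ_iff.mp (mem_range.mp hk))]]
  simp [mul_comm]

theorem coeff_hatSubst (R : ℚ⟦X⟧) (P : ℚ⟦X⟧⟦X⟧) (a : ℕ) :
    coeff a (hatSubst R P) = R⁻¹ ^ a * comp (coeff a P) wSubst := by
  rw [hatSubst, coeff_mk]

theorem pow_add_two_mul_mul_inv_sq_mul_inv_pow {R : ℚ⟦X⟧} (hR : constantCoeff R ≠ 0)
    (hR2 : R ^ 2 = 1 + 4 * X) (a d : ℕ) (F : ℚ⟦X⟧) :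
    R ^ (a + 2 * d) * R⁻¹ ^ 2 * (R⁻¹ ^ a * F) = (1 + 4 * X) ^ d * (1 + 4 * X)⁻¹ * F := by
  have hRinv : R * R⁻¹ = 1 := PowerSeries.mul_inv_cancel _ hR
  have hinv : R⁻¹ ^ 2 = (1 + 4 * X)⁻¹ := by
    rw [← hR2, pow_two, pow_two, PowerSeries.mul_inv_rev]
  have hRa : R ^ a * R⁻¹ ^ a = 1 := by rw [← mul_pow, hRinv, one_pow]
  rw [← hinv, ← hR2]
  linear_combination (R ^ (2 * d) * R⁻¹ ^ 2 * F) * hRa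

/-- Let `P(x,w) ∈ ℚ⟦x,w⟧` and let `a, d ≥ 0`.  Then the coefficient of `xᵃ·w^d` in `P`
equals `(-1)^d` times the coefficient of `yᵃ·u^d` in `R(u)^{a+2d-2}·P̂(y,u)`, where
`R(u)` is the unique square root of `1+4u` with constant term `1` (and the possibly
negative power `R^{a+2d-2}` is written `R^{a+2d}·(R⁻¹)²`). -/
theorem statement7 (R : PowerSeries ℚ) (hR0 : PowerSeries.constantCoeff (R := ℚ) R = 1)
    (hR2 : R ^ 2 = 1 + 4 * PowerSeries.X)
    (P : PowerSeries (PowerSeries ℚ)) (a d : ℕ) :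
    PowerSeries.coeff (R := ℚ) d (PowerSeries.coeff (R := PowerSeries ℚ) a P) =
      (-1 : ℚ) ^ d * PowerSeries.coeff (R := ℚ) d
        (R ^ (a + 2 * d) * (R⁻¹) ^ 2 *
          PowerSeries.coeff (R := PowerSeries ℚ) a (hatSubst R P)) := by
  rw [coeff_hatSubst, pow_add_two_mul_mul_inv_sq_mul_inv_pow (hR0 ▸ one_ne_zero) hR2, coeff_mul_comp_wSubst,
    ← mul_assoc, ← mul_pow]
  norm_num
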